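/- The population bias of the AIPW functional using working models (m̄₁, ē) equals E[ ((e(X) − ē(X))/ē(X)) · (m₁(X) − m̄₁(X)) ], a product of the two model errors; hence it is bounded by c⁻¹ · E[(e(X)−ē(X))²]^{1/2} · E[(m₁(X)−m̄₁(X))²]^{1/2} when ē(X) ≥ c > 0. -/

import Mathlib

/-!
Write `e = μ[T | 𝒢]`. On `{T = 1}` the outcome is `Y₁`, so `T Y = T Y₁`, and conditional
independence of `Y₁` and `T` given `𝒢` factorizes `μ[T Y₁ | 𝒢] = e · μ[Y₁ | 𝒢]`; as `e ≥ c > 0`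
this identifies `m₁` with `μ[Y₁ | 𝒢]`, so `E[Y₁] = E[m₁]`. The AIPW integrand is
`m̄₁ + T (Y - m̄₁) / ē`, and since `ē` and `m̄₁` are `𝒢`-measurable the tower property replaces
`T (Y - m̄₁)` by `(m₁ - m̄₁) e`. Subtracting `E[m₁]` leaves `E[(e - ē)/ē · (m₁ - m̄₁)]`, which
`ē ≥ c` and Cauchy–Schwarz bound by `c⁻¹ ‖e - ē‖₂ ‖m₁ - m̄₁‖₂`.
-/

open MeasureTheory ProbabilityTheory

namespace ProbabilityTheory

variable {Ω : Type*} {m' mΩ : MeasurableSpace Ω} [StandardBorelSpace Ω] {hm' : m' ≤ mΩ}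
  {μ : Measure Ω} [IsFiniteMeasure μ]

lemma CondIndepFun.congr_ae {β β' : Type*} [MeasurableSpace β] [MeasurableSpace β']
    {f f' : Ω → β} {g g' : Ω → β'} (h : CondIndepFun m' hm' f g μ)
    (hf : f =ᵐ[μ] f') (hg : g =ᵐ[μ] g') : CondIndepFun m' hm' f' g' μ := by
  rw [← condExpKernel_comp_trim (μ := μ) hm'] at hf hg
  exact Kernel.IndepFun.congr' h (Measure.ae_ae_of_ae_comp hf) (Measure.ae_ae_of_ae_comp hg)

lemma CondIndepFun.ae_indepFun_condExpKernel {β β' : Type*} [MeasurableSpace β]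
    [MeasurableSpace β'] [MeasurableSpace.CountableOrCountablyGenerated Ω (β × β')]
    {f : Ω → β} {g : Ω → β'} (h : CondIndepFun m' hm' f g μ)
    (hf : Measurable f) (hg : Measurable g) :
    ∀ᵐ ω ∂μ, IndepFun f g (condExpKernel μ m' ω) := by
  filter_upwards [ae_of_ae_trim hm' ((condIndepFun_iff_map_prod_eq_prod_map_map hf hg).1 h)]
    with ω hω
  rw [indepFun_iff_map_prod_eq_prod_map_map hf.aemeasurable hg.aemeasurable]
  simpa [Kernel.map_apply _ (hf.prodMk hg), Kernel.map_apply _ hf, Kernel.map_apply _ hg,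
    Kernel.prod_apply] using hω

lemma CondIndepFun.condExp_mul_of_measurable {f g : Ω → ℝ} (h : CondIndepFun m' hm' f g μ)
    (hf_meas : Measurable f) (hg_meas : Measurable g) (hf : Integrable f μ)
    (hg : Integrable g μ) (hfg : Integrable (f * g) μ) :
    μ[f * g | m'] =ᵐ[μ] μ[f | m'] * μ[g | m'] := by
  filter_upwards [condExp_ae_eq_integral_condExpKernel hm' hfg,
    condExp_ae_eq_integral_condExpKernel hm' hf, condExp_ae_eq_integral_condExpKernel hm' hg,
    h.ae_indepFun_condExpKernel hf_meas hg_meas] with ω hfg_eq hf_eq hg_eq hindep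
  rw [hfg_eq, Pi.mul_apply, hf_eq, hg_eq]
  exact hindep.integral_mul_eq_mul_integral hf_meas.aestronglyMeasurable
    hg_meas.aestronglyMeasurable

theorem CondIndepFun.condExp_mul {f g : Ω → ℝ} (h : CondIndepFun m' hm' f g μ)
    (hf : Integrable f μ) (hg : Integrable g μ) (hfg : Integrable (f * g) μ) :
    μ[f * g | m'] =ᵐ[μ] μ[f | m'] * μ[g | m'] := by
  have hff' : f =ᵐ[μ] hf.1.mk f := hf.1.ae_eq_mk
  have hgg' : g =ᵐ[μ] hg.1.mk g := hg.1.ae_eq_mk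
  have hmk := (h.congr_ae hff' hgg').condExp_mul_of_measurable
    hf.1.stronglyMeasurable_mk.measurable hg.1.stronglyMeasurable_mk.measurable
    (hf.congr hff') (hg.congr hgg') (hfg.congr (hff'.mul hgg'))
  filter_upwards [condExp_congr_ae (m := m') (hff'.mul hgg'), condExp_congr_ae (m := m') hff',
    condExp_congr_ae (m := m') hgg', hmk] with ω hfg_eq hf_eq hg_eq hω
  rw [hfg_eq, Pi.mul_apply, hf_eq, hg_eq, hω, Pi.mul_apply]

end ProbabilityTheory

section CauchySchwarz

variable {α : Type*} {mα : MeasurableSpace α} {μ : Measure α}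

lemma integral_abs_mul_abs_le_sqrt_mul_sqrt {u v : α → ℝ} (hu : MemLp u 2 μ)
    (hv : MemLp v 2 μ) :
    ∫ x, |u x| * |v x| ∂μ ≤ √(∫ x, u x ^ 2 ∂μ) * √(∫ x, v x ^ 2 ∂μ) := by
  have hholder := integral_mul_le_Lp_mul_Lq_of_nonneg Real.HolderConjugate.two_two
    (Filter.Eventually.of_forall fun x => abs_nonneg (u x))
    (Filter.Eventually.of_forall fun x => abs_nonneg (v x))
    (by simpa [Real.norm_eq_abs] using hu.norm) (by simpa [Real.norm_eq_abs] using hv.norm)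
  simpa [Real.sqrt_eq_rpow] using hholder

lemma abs_integral_div_mul_le {u v w : α → ℝ} {c : ℝ} (hc : 0 < c) (hw : ∀ᵐ x ∂μ, c ≤ w x)
    (hu : MemLp u 2 μ) (hv : MemLp v 2 μ) :
    |∫ x, u x / w x * v x ∂μ| ≤ c⁻¹ * √(∫ x, u x ^ 2 ∂μ) * √(∫ x, v x ^ 2 ∂μ) := by
  have huv : Integrable (fun x => |u x| * |v x|) μ := hu.abs.integrable_mul hv.abs
  have hbound : ∀ᵐ x ∂μ, ‖u x / w x * v x‖ ≤ c⁻¹ * (|u x| * |v x|) := by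
    filter_upwards [hw] with x hx
    rw [Real.norm_eq_abs, abs_mul, abs_div, abs_of_pos (hc.trans_le hx), div_mul_eq_mul_div,
      div_eq_inv_mul]
    gcongr
  calc |∫ x, u x / w x * v x ∂μ|
      ≤ ∫ x, c⁻¹ * (|u x| * |v x|) ∂μ := norm_integral_le_of_norm_le (huv.const_mul _) hbound
    _ = c⁻¹ * ∫ x, |u x| * |v x| ∂μ := integral_const_mul _ _
    _ ≤ c⁻¹ * √(∫ x, u x ^ 2 ∂μ) * √(∫ x, v x ^ 2 ∂μ) := by
      rw [mul_assoc]
      gcongr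
      exact integral_abs_mul_abs_le_sqrt_mul_sqrt hu hv

end CauchySchwarz

section AIPW

variable {Ω : Type*} {m mΩ : MeasurableSpace Ω} {μ : Measure Ω} [IsFiniteMeasure μ]

lemma integral_mul_condExp_of_stronglyMeasurable (hm : m ≤ mΩ) {f g : Ω → ℝ}
    (hg : StronglyMeasurable[m] g) (hf : Integrable f μ) (hgf : Integrable (g * f) μ) :
    ∫ x, g x * f x ∂μ = ∫ x, g x * (μ[f | m]) x ∂μ :=
  (integral_condExp hm).symm.trans
    (integral_congr_ae (condExp_mul_of_stronglyMeasurable_left hg hgf hf))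

lemma integral_aipw_sub_eq (hm : m ≤ mΩ) {T Y m1 m1bar ebar : Ω → ℝ} {c : ℝ} (hc : 0 < c)
    (hT_bdd : ∀ᵐ ω ∂μ, ‖T ω‖ ≤ 1) (hT : Integrable T μ) (hTY : Integrable (T * Y) μ)
    (hm1 : μ[T * Y | m] =ᵐ[μ] m1 * μ[T | m]) (hm1_int : Integrable m1 μ)
    (hm1bar_meas : StronglyMeasurable[m] m1bar) (hm1bar_int : Integrable m1bar μ)
    (hebar_meas : StronglyMeasurable[m] ebar) (hebar_pos : ∀ᵐ ω ∂μ, c ≤ ebar ω) :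
    (∫ ω, (T ω * Y ω / ebar ω - (T ω - ebar ω) * m1bar ω / ebar ω) ∂μ) - ∫ ω, m1 ω ∂μ
      = ∫ ω, ((μ[T | m]) ω - ebar ω) / ebar ω * (m1 ω - m1bar ω) ∂μ := by
  set e := μ[T | m]
  set w : Ω → ℝ := fun ω => (ebar ω)⁻¹
  have hw_meas : StronglyMeasurable[m] w := hebar_meas.measurable.inv.stronglyMeasurable
  have hw_bdd : ∀ᵐ ω ∂μ, ‖w ω‖ ≤ c⁻¹ := by
    filter_upwards [hebar_pos] with ω h
    rw [Real.norm_eq_abs, abs_inv, abs_of_pos (hc.trans_le h)]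
    exact inv_anti₀ hc h
  set r := T * Y - m1bar * T
  have hm1barT : Integrable (m1bar * T) μ := hm1bar_int.mul_bdd hT.1 hT_bdd
  have hr : Integrable r μ := hTY.sub hm1barT
  have hr_cond : μ[r | m] =ᵐ[μ] (m1 - m1bar) * e := by
    filter_upwards [condExp_sub hTY hm1barT m, hm1,
      condExp_mul_of_stronglyMeasurable_left hm1bar_meas hm1barT hT] with ω h₁ h₂ h₃
    simp only [r, h₁, Pi.sub_apply, h₂, h₃, Pi.mul_apply]
    ring
  have hwr : Integrable (fun ω => w ω * r ω) μ :=
    hr.bdd_mul (hw_meas.mono hm).aestronglyMeasurable hw_bdd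
  have hwr_cond : Integrable (fun ω => w ω * (μ[r | m]) ω) μ :=
    integrable_condExp.bdd_mul (hw_meas.mono hm).aestronglyMeasurable hw_bdd
  have hsum : Integrable (fun ω => m1bar ω + w ω * (μ[r | m]) ω) μ := hm1bar_int.add hwr_cond
  have haipw : (fun ω => T ω * Y ω / ebar ω - (T ω - ebar ω) * m1bar ω / ebar ω)
      =ᵐ[μ] fun ω => m1bar ω + w ω * r ω := by
    filter_upwards [hebar_pos] with ω h
    have : ebar ω ≠ 0 := (hc.trans_le h).ne'
    simp only [w, r, Pi.sub_apply, Pi.mul_apply]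
    field_simp
    ring
  calc (∫ ω, (T ω * Y ω / ebar ω - (T ω - ebar ω) * m1bar ω / ebar ω) ∂μ) - ∫ ω, m1 ω ∂μ
      = (∫ ω, m1bar ω ∂μ) + (∫ ω, w ω * (μ[r | m]) ω ∂μ) - ∫ ω, m1 ω ∂μ := by
        rw [integral_congr_ae haipw, integral_add hm1bar_int hwr,
          integral_mul_condExp_of_stronglyMeasurable hm hw_meas hr hwr]
    _ = ∫ ω, (m1bar ω + w ω * (μ[r | m]) ω - m1 ω) ∂μ := by
        rw [integral_sub hsum hm1_int, integral_add hm1bar_int hwr_cond]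
    _ = ∫ ω, (e ω - ebar ω) / ebar ω * (m1 ω - m1bar ω) ∂μ := by
        refine integral_congr_ae ?_
        filter_upwards [hebar_pos, hr_cond] with ω h hω
        have : ebar ω ≠ 0 := (hc.trans_le h).ne'
        simp only [w, hω, Pi.sub_apply, Pi.mul_apply]
        field_simp
        ring

end AIPW

theorem stmt_6_general {Ω : Type*} {mΩ : MeasurableSpace Ω} [StandardBorelSpace Ω]
    (μ : Measure Ω) [IsProbabilityMeasure μ]
    (𝒢 : MeasurableSpace Ω) (h𝒢 : 𝒢 ≤ mΩ)
    (Y1 Y0 T Y m1 m1bar ebar : Ω → ℝ) (c : ℝ) (hc : 0 < c)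
    (hTbin : ∀ ω, T ω = 0 ∨ T ω = 1)
    (hcons : ∀ ω, Y ω = T ω * Y1 ω + (1 - T ω) * Y0 ω)
    (hunconf : CondIndepFun 𝒢 h𝒢 Y1 T μ)
    (he_pos : ∀ᵐ ω ∂μ, c ≤ (μ[T | 𝒢]) ω)
    (hm1 : μ[fun ω => T ω * Y ω | 𝒢] =ᵐ[μ] fun ω => m1 ω * (μ[T | 𝒢]) ω)
    (hm1bar_meas : StronglyMeasurable[𝒢] m1bar)
    (hebar_meas : StronglyMeasurable[𝒢] ebar)
    (hebar_pos : ∀ᵐ ω ∂μ, c ≤ ebar ω)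
    (hY1int : Integrable Y1 μ)
    (hTYint : Integrable (fun ω => T ω * Y ω) μ)
    (hm1sq : MemLp m1 2 μ) (hm1barsq : MemLp m1bar 2 μ)
    (hesq : MemLp (fun ω => (μ[T | 𝒢]) ω) 2 μ) (hebarsq : MemLp ebar 2 μ) :
    (∫ ω, (T ω * Y ω / ebar ω - (T ω - ebar ω) * m1bar ω / ebar ω) ∂μ)
        - ∫ ω, Y1 ω ∂μ
      = ∫ ω, ((μ[T | 𝒢]) ω - ebar ω) / ebar ω * (m1 ω - m1bar ω) ∂μ ∧
    |(∫ ω, (T ω * Y ω / ebar ω - (T ω - ebar ω) * m1bar ω / ebar ω) ∂μ)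
        - ∫ ω, Y1 ω ∂μ| ≤
      c⁻¹ * Real.sqrt (∫ ω, ((μ[T | 𝒢]) ω - ebar ω) ^ 2 ∂μ)
        * Real.sqrt (∫ ω, (m1 ω - m1bar ω) ^ 2 ∂μ) := by
  have hT : Integrable T μ := by
    by_contra hT
    rw [condExp_of_not_integrable hT] at he_pos
    obtain ⟨ω, hω⟩ := he_pos.exists
    exact hc.not_ge hω
  have hTY : T * Y = T * Y1 := by
    ext ω
    rcases hTbin ω with h | h <;> simp [hcons ω, h]
  have hm1' : μ[T * Y1 | 𝒢] =ᵐ[μ] m1 * μ[T | 𝒢] := by rw [← hTY]; exact hm1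
  have hfactor : μ[T * Y1 | 𝒢] =ᵐ[μ] μ[T | 𝒢] * μ[Y1 | 𝒢] :=
    hunconf.symm.condExp_mul hT hY1int (hTY ▸ hTYint)
  have hm1_eq : m1 =ᵐ[μ] μ[Y1 | 𝒢] := by
    filter_upwards [hm1', hfactor, he_pos] with ω h₁ h₂ he
    exact mul_right_cancel₀ (hc.trans_le he).ne' (h₁.symm.trans (h₂.trans (mul_comm _ _)))
  have hY1 : ∫ ω, Y1 ω ∂μ = ∫ ω, m1 ω ∂μ :=
    (integral_condExp h𝒢).symm.trans (integral_congr_ae hm1_eq.symm)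
  have hbias := integral_aipw_sub_eq h𝒢 hc
    (.of_forall fun ω => by rcases hTbin ω with h | h <;> simp [h]) hT hTYint hm1
    (integrable_condExp.congr hm1_eq.symm) hm1bar_meas (hm1barsq.integrable one_le_two)
    hebar_meas hebar_pos
  rw [hY1, hbias]
  exact ⟨rfl, abs_integral_div_mul_le hc hebar_pos (hesq.sub hebarsq) (hm1sq.sub hm1barsq)⟩

/-- Bias of the AIPW functional: with true `e = E[T|𝒢]`, true `m₁`
(`E[TY|𝒢] = m₁ e` a.e.), and working models `m̄₁, ē` (`𝒢`-measurable, `ē ≥ c > 0` a.s.),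
the population bias equals `E[((e−ē)/ē)(m₁−m̄₁)]`, and hence is bounded by
`c⁻¹ E[(e−ē)²]^{1/2} E[(m₁−m̄₁)²]^{1/2}` by Cauchy–Schwarz. -/
theorem stmt_6 {Ω : Type*} {mΩ : MeasurableSpace Ω} [StandardBorelSpace Ω]
    (μ : Measure Ω) [IsProbabilityMeasure μ]
    (𝒢 : MeasurableSpace Ω) (h𝒢 : 𝒢 ≤ mΩ)
    (Y1 Y0 T Y m1 m1bar ebar : Ω → ℝ) (c : ℝ) (hc : 0 < c)
    (hTbin : ∀ ω, T ω = 0 ∨ T ω = 1)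
    (hcons : ∀ ω, Y ω = T ω * Y1 ω + (1 - T ω) * Y0 ω)
    (hunconf : CondIndepFun 𝒢 h𝒢 Y1 T μ)
    (he_pos : ∀ᵐ ω ∂μ, c ≤ (μ[T | 𝒢]) ω)
    (hm1_meas : StronglyMeasurable[𝒢] m1)
    (hm1 : μ[fun ω => T ω * Y ω | 𝒢] =ᵐ[μ] fun ω => m1 ω * (μ[T | 𝒢]) ω)
    (hm1bar_meas : StronglyMeasurable[𝒢] m1bar)
    (hebar_meas : StronglyMeasurable[𝒢] ebar)
    (hebar_pos : ∀ᵐ ω ∂μ, c ≤ ebar ω)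
    (hY1int : Integrable Y1 μ)
    (hTYint : Integrable (fun ω => T ω * Y ω) μ)
    (hm1sq : MemLp m1 2 μ) (hm1barsq : MemLp m1bar 2 μ)
    (hesq : MemLp (fun ω => (μ[T | 𝒢]) ω) 2 μ) (hebarsq : MemLp ebar 2 μ)
    (hAIPWint : Integrable
      (fun ω => T ω * Y ω / ebar ω - (T ω - ebar ω) * m1bar ω / ebar ω) μ)
    (hdriftint : Integrable
      (fun ω => ((μ[T | 𝒢]) ω - ebar ω) / ebar ω * (m1 ω - m1bar ω)) μ) :
    (∫ ω, (T ω * Y ω / ebar ω - (T ω - ebar ω) * m1bar ω / ebar ω) ∂μ)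
        - ∫ ω, Y1 ω ∂μ
      = ∫ ω, ((μ[T | 𝒢]) ω - ebar ω) / ebar ω * (m1 ω - m1bar ω) ∂μ ∧
    |(∫ ω, (T ω * Y ω / ebar ω - (T ω - ebar ω) * m1bar ω / ebar ω) ∂μ)
        - ∫ ω, Y1 ω ∂μ| ≤
      c⁻¹ * Real.sqrt (∫ ω, ((μ[T | 𝒢]) ω - ebar ω) ^ 2 ∂μ)
        * Real.sqrt (∫ ω, (m1 ω - m1bar ω) ^ 2 ∂μ) :=
  stmt_6_general μ 𝒢 h𝒢 Y1 Y0 T Y m1 m1bar ebar c hc hTbin hcons hunconf he_pos hm1 hm1bar_meas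
    hebar_meas hebar_pos hY1int hTYint hm1sq hm1barsq hesq hebarsq
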